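/- If −π/6 < θ_i < θ_j < θ_k < π/6, then sin³(θ_k−θ_i)·cos(θ_i) − sin³(θ_k−θ_j)·cos(θ_j) > 0. -/

import Mathlib

open Real Set

/-!
The function `θ ↦ sin³(θ_k - θ) cos θ` is strictly decreasing on `[θ_i, θ_k]`. Its derivative is
`-sin²(θ_k - θ) (3 cos(θ_k - θ) cos θ + sin(θ_k - θ) sin θ)`, and the bracket equals
`2 cos(θ_k - θ) cos θ + cos(θ_k - 2θ)`, a sum of positive terms because `θ_k - θ`, `θ` and
`θ_k - 2θ` all lie in `(-π/2, π/2)` when `θ_i, θ_k ∈ (-π/6, π/6)`.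
-/

theorem hasDerivAt_sin_sub_pow_three_mul_cos (c x : ℝ) :
    HasDerivAt (fun θ => sin (c - θ) ^ 3 * cos θ)
      (-(sin (c - x) ^ 2 * (3 * cos (c - x) * cos x + sin (c - x) * sin x))) x := by
  have hsub : HasDerivAt (fun θ : ℝ => c - θ) (-1) x := by
    simpa using (hasDerivAt_id x).const_sub c
  have hsin : HasDerivAt (fun θ => sin (c - θ)) (cos (c - x) * -1) x :=
    (hasDerivAt_sin _).comp x hsub
  refine ((hsin.fun_pow 3).fun_mul (hasDerivAt_cos x)).congr_deriv ?_
  norm_num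
  ring

theorem three_mul_cos_mul_cos_add_sin_mul_sin_pos {a x : ℝ}
    (ha : a ∈ Ioo (-(π / 2)) (π / 2)) (hx : x ∈ Ioo (-(π / 2)) (π / 2))
    (hax : a - x ∈ Ioo (-(π / 2)) (π / 2)) :
    0 < 3 * cos a * cos x + sin a * sin x := by
  have hcos : 0 < cos a * cos x := mul_pos (cos_pos_of_mem_Ioo ha) (cos_pos_of_mem_Ioo hx)
  have hcos_sub := cos_pos_of_mem_Ioo hax
  rw [cos_sub] at hcos_sub
  linarith

theorem strictAntiOn_sin_sub_pow_three_mul_cos {l c : ℝ} (hl : -(π / 6) < l) (hc : c < π / 6) :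
    StrictAntiOn (fun θ => sin (c - θ) ^ 3 * cos θ) (Icc l c) := by
  apply strictAntiOn_of_deriv_neg (convex_Icc l c) (by fun_prop)
  intro x hx
  rw [interior_Icc] at hx
  obtain ⟨hlx, hxc⟩ := hx
  rw [(hasDerivAt_sin_sub_pow_three_mul_cos c x).deriv, neg_lt_zero]
  have hsin : 0 < sin (c - x) := sin_pos_of_pos_of_lt_pi (by linarith) (by linarith)
  have hbracket : 0 < 3 * cos (c - x) * cos x + sin (c - x) * sin x :=
    three_mul_cos_mul_cos_add_sin_mul_sin_pos ⟨by linarith, by linarith⟩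
      ⟨by linarith, by linarith⟩ ⟨by linarith, by linarith⟩
  positivity

theorem stmt3 (θi θj θk : ℝ) (hlb : -(Real.pi/6) < θi) (h1 : θi < θj) (h2 : θj < θk)
    (hub : θk < Real.pi/6) :
    (Real.sin (θk - θi))^3 * Real.cos θi - (Real.sin (θk - θj))^3 * Real.cos θj > 0 := by
  exact sub_pos.mpr <| strictAntiOn_sin_sub_pow_three_mul_cos hlb hub
    (left_mem_Icc.mpr (h1.trans h2).le) ⟨h1.le, h2.le⟩ h1
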